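/- arXiv:1511.03616 — 2 statements merged into one kernel-verified Lean document; each statement's English description precedes it below -/
import Mathlib

section
/- (Deterministic form of Lemma 3.3(i)a) Suppose 0 < α_P^low < α_A^high. Then the supremum of F(a,z,γ,δ,α_P^low,α_A^high) over all deterministic actions a, all z ∈ ℝ, all δ ∈ ℝ, and all γ with γ < -R_P(1-z)², equals G(a*, z*, α_A^high) = -ρ^{R_P/(R_A+R_P)} ((R_A+R_P)/R_P)(R_A/R_P)^{-R_A/(R_A+R_P)} exp( (R_A R_P/(R_A+R_P)) ( T(k(a*) - a*) + (T/2) α_A^high R_A R_P/(R_A+R_P) ) ). -/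
/-! Maximising over `δ` balances the two exponentials and turns `F` into `G`, which is decreasing
in its exponent. For `γ < -R_P(1-z)²` and `α_P < α_A` that exponent exceeds its value at
`γ = -R_P(1-z)²`, where the `α_P`-terms cancel; what remains is minimised by `a*` and `z*`. Letting
`γ ↑ -R_P(1-z*)²` along `a = a*`, `z = z*` shows that the bound is the supremum. -/

open MeasureTheory

/-- The objective `F(a,z,γ,δ,α_P,α_A)` from the first-best problem. -/
noncomputable def Fobj (R_A R_P ρ T : ℝ) (k a : ℝ → ℝ) (z γ δ αP αA : ℝ) : ℝ :=
  -Real.exp (R_P * (δ - (1 - z) * (∫ s in (0:ℝ)..T, a s)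
      + (R_P * (1 - z) ^ 2 / 2 + γ / 2) * αP * T))
  - ρ * Real.exp (R_A * ((∫ s in (0:ℝ)..T, k (a s))
      - z * (∫ s in (0:ℝ)..T, a s) - δ + (R_A * z ^ 2 / 2 - γ / 2) * αA * T))

/-- The quantity `G(a,z,γ,α_P,α_A)`. -/
noncomputable def Gobj (R_A R_P ρ T : ℝ) (k a : ℝ → ℝ) (z γ αP αA : ℝ) : ℝ :=
  -(ρ ^ (R_P / (R_A + R_P)) * ((R_A + R_P) / R_P)
      * (R_A / R_P) ^ (-(R_A / (R_A + R_P)))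
      * Real.exp ((R_A * R_P / (R_A + R_P)) * ((∫ s in (0:ℝ)..T, (k (a s) - a s))
          + γ / 2 * T * (αP - αA)
          + T / 2 * (αP * R_P * (1 - z) ^ 2 + αA * R_A * z ^ 2))))

/-- A deterministic action: a measurable map `[0,T] → [0, a_max]`. -/
def IsAction (T aMax : ℝ) (a : ℝ → ℝ) : Prop :=
  Measurable a ∧ ∀ s ∈ Set.Icc (0 : ℝ) T, a s ∈ Set.Icc (0 : ℝ) aMax

open Real Set

noncomputable def Gconst (R_A R_P ρ : ℝ) : ℝ :=
  ρ ^ (R_P / (R_A + R_P)) * ((R_A + R_P) / R_P) * (R_A / R_P) ^ (-(R_A / (R_A + R_P)))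

noncomputable def Gexponent (R_A R_P T : ℝ) (k a : ℝ → ℝ) (z γ αP αA : ℝ) : ℝ :=
  (∫ s in (0:ℝ)..T, (k (a s) - a s)) + γ / 2 * T * (αP - αA)
    + T / 2 * (αP * R_P * (1 - z) ^ 2 + αA * R_A * z ^ 2)

section

variable {R_A R_P ρ T : ℝ} {k a : ℝ → ℝ}

theorem Gobj_eq (z γ αP αA : ℝ) :
    Gobj R_A R_P ρ T k a z γ αP αA
      = -(Gconst R_A R_P ρ * exp (R_A * R_P / (R_A + R_P) * Gexponent R_A R_P T k a z γ αP αA)) :=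
  rfl

theorem Gconst_pos (hRA : 0 < R_A) (hRP : 0 < R_P) (hρ : 0 < ρ) : 0 < Gconst R_A R_P ρ := by
  unfold Gconst; positivity

theorem isLeast_exp_add_exp (hRA : 0 < R_A) (hRP : 0 < R_P) (hρ : 0 < ρ) (X Y : ℝ) :
    IsLeast (range fun δ => exp (R_P * (δ + X)) + ρ * exp (R_A * (Y - δ)))
      (Gconst R_A R_P ρ * exp (R_A * R_P / (R_A + R_P) * (X + Y))) := by
  have hq : 0 < R_A / R_P := by positivity
  have hlog : log (ρ * R_A / R_P) = log ρ + log (R_A / R_P) := by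
    rw [mul_div_assoc, log_mul hρ.ne' hq.ne']
  set δ₀ := (log (ρ * R_A / R_P) + R_A * Y - R_P * X) / (R_A + R_P)
  set u := exp (R_P * (δ₀ + X))
  set v := ρ * exp (R_A * (Y - δ₀))
  -- `δ₀` is the critical point: there the tangent lines `exp t ≥ 1 + t` of the two terms
  -- have opposite slopes, so their sum is the constant `u + v`.
  have hfoc : R_P * u = R_A * v := by
    have : R_P * (δ₀ + X) = log (ρ * R_A / R_P) + R_A * (Y - δ₀) := by
      simp only [δ₀]; field_simp; ring
    simp only [u, v, this, exp_add, exp_log (by positivity : 0 < ρ * R_A / R_P)]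
    field_simp
  have hv : v = ρ ^ (R_P / (R_A + R_P)) * (R_A / R_P) ^ (-(R_A / (R_A + R_P)))
      * exp (R_A * R_P / (R_A + R_P) * (X + Y)) := by
    rw [rpow_def_of_pos hρ, rpow_def_of_pos hq, ← exp_add, ← exp_add]
    simp only [v, δ₀, hlog]
    rw [← exp_log hρ, ← exp_add, exp_log hρ]
    congr 1
    field_simp
    ring
  have hval : u + v = Gconst R_A R_P ρ * exp (R_A * R_P / (R_A + R_P) * (X + Y)) := by
    rw [show u = R_A / R_P * v by field_simp; linarith, hv, Gconst]
    field_simp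
  refine ⟨⟨δ₀, hval⟩, ?_⟩
  rintro _ ⟨δ, rfl⟩
  rw [← hval]
  have hu : exp (R_P * (δ + X)) = u * exp (R_P * (δ - δ₀)) := by
    rw [← exp_add]; ring_nf
  have hv' : ρ * exp (R_A * (Y - δ)) = v * exp (-(R_A * (δ - δ₀))) := by
    rw [mul_assoc, ← exp_add]; ring_nf
  have hu_tangent := mul_le_mul_of_nonneg_left (add_one_le_exp (R_P * (δ - δ₀)))
    (exp_pos _).le (a := u)
  have hv_tangent := mul_le_mul_of_nonneg_left (add_one_le_exp (-(R_A * (δ - δ₀))))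
    (by positivity : 0 ≤ v)
  simp only [hu, hv']
  linear_combination hu_tangent + hv_tangent - (δ - δ₀) * hfoc

theorem IsAction.intervalIntegrable_comp {aMax : ℝ} (ha : IsAction T aMax a) (hT : 0 ≤ T)
    {f : ℝ → ℝ} (hf : Continuous f) : IntervalIntegrable (fun s => f (a s)) volume 0 T := by
  obtain ⟨M, hM⟩ := isCompact_Icc.exists_bound_of_continuousOn hf.continuousOn (s := Icc 0 aMax)
  rw [intervalIntegrable_iff_integrableOn_Icc_of_le hT]
  refine Measure.integrableOn_of_bounded measure_Icc_lt_top.ne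
    (hf.measurable.comp ha.1).aestronglyMeasurable (M := M) ?_
  filter_upwards [ae_restrict_mem measurableSet_Icc] with s hs
  exact hM _ (ha.2 s hs)

theorem isGreatest_range_Fobj (hRA : 0 < R_A) (hRP : 0 < R_P) (hρ : 0 < ρ)
    (ha : IntervalIntegrable a volume 0 T) (hka : IntervalIntegrable (fun s => k (a s)) volume 0 T)
    (z γ αP αA : ℝ) :
    IsGreatest (range fun δ => Fobj R_A R_P ρ T k a z γ δ αP αA) (Gobj R_A R_P ρ T k a z γ αP αA) := by
  set X := -((1 - z) * ∫ s in (0:ℝ)..T, a s) + (R_P * (1 - z) ^ 2 / 2 + γ / 2) * αP * T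
  set Y := (∫ s in (0:ℝ)..T, k (a s)) - z * (∫ s in (0:ℝ)..T, a s)
    + (R_A * z ^ 2 / 2 - γ / 2) * αA * T
  have hF (δ : ℝ) : Fobj R_A R_P ρ T k a z γ δ αP αA
      = -(exp (R_P * (δ + X)) + ρ * exp (R_A * (Y - δ))) := by
    simp only [Fobj, X, Y]; ring_nf
  have hG : Gexponent R_A R_P T k a z γ αP αA = X + Y := by
    unfold Gexponent; rw [intervalIntegral.integral_sub hka ha]; ring
  obtain ⟨⟨δ₀, hδ₀⟩, hmin⟩ := isLeast_exp_add_exp hRA hRP hρ X Y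
  rw [Gobj_eq, hG]
  refine ⟨⟨δ₀, by simp only [hF, hδ₀]⟩, ?_⟩
  rintro _ ⟨δ, rfl⟩
  simpa only [hF, neg_le_neg_iff] using hmin ⟨δ, rfl⟩

theorem Gobj_le_Gobj (hRA : 0 < R_A) (hRP : 0 < R_P) (hρ : 0 < ρ) {a' : ℝ → ℝ}
    {z z' γ γ' αP αP' αA αA' : ℝ}
    (h : Gexponent R_A R_P T k a' z' γ' αP' αA' ≤ Gexponent R_A R_P T k a z γ αP αA) :
    Gobj R_A R_P ρ T k a z γ αP αA ≤ Gobj R_A R_P ρ T k a' z' γ' αP' αA' := by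
  rw [Gobj_eq, Gobj_eq, neg_le_neg_iff]
  gcongr
  exact (Gconst_pos hRA hRP hρ).le

theorem continuous_Gobj_gamma (z αP αA : ℝ) :
    Continuous fun γ => Gobj R_A R_P ρ T k a z γ αP αA := by
  unfold Gobj; fun_prop

theorem Gobj_neg_mul_sq_eq (z αP αA : ℝ) :
    Gobj R_A R_P ρ T k a z (-(R_P * (1 - z) ^ 2)) αP αA = Gobj R_A R_P ρ T k a z 0 αA αA := by
  unfold Gobj; ring_nf

theorem isMinOn_mul_one_sub_sq_add_mul_sq (hRA : 0 < R_A) (hRP : 0 < R_P) :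
    IsMinOn (fun z => R_P * (1 - z) ^ 2 + R_A * z ^ 2) univ (R_P / (R_A + R_P)) := by
  refine isMinOn_univ_iff.2 fun z => ?_
  have hgap : R_P * (1 - z) ^ 2 + R_A * z ^ 2 - (R_P * (1 - R_P / (R_A + R_P)) ^ 2
      + R_A * (R_P / (R_A + R_P)) ^ 2) = (R_A + R_P) * (z - R_P / (R_A + R_P)) ^ 2 := by
    field_simp; ring
  nlinarith [sq_nonneg (z - R_P / (R_A + R_P))]

theorem monotone_Gobj_gamma (hRA : 0 < R_A) (hRP : 0 < R_P) (hρ : 0 < ρ) (hT : 0 ≤ T)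
    {αP αA : ℝ} (hα : αP ≤ αA) (z : ℝ) :
    Monotone fun γ => Gobj R_A R_P ρ T k a z γ αP αA := by
  intro γ γ' hγ
  refine Gobj_le_Gobj hRA hRP hρ ?_
  unfold Gexponent
  nlinarith [mul_nonneg (mul_nonneg (sub_nonneg.2 hγ) (sub_nonneg.2 hα)) hT]

theorem Gobj_le_Gobj_const (hRA : 0 < R_A) (hRP : 0 < R_P) (hρ : 0 < ρ) (hT : 0 ≤ T)
    (hk : Continuous k) {aMax astar : ℝ} (ha : IsAction T aMax a)
    (hastar_min : ∀ x ∈ Icc (0 : ℝ) aMax, k astar - astar ≤ k x - x) {αA : ℝ} (hαA : 0 ≤ αA)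
    (z : ℝ) :
    Gobj R_A R_P ρ T k a z 0 αA αA
      ≤ Gobj R_A R_P ρ T k (fun _ => astar) (R_P / (R_A + R_P)) 0 αA αA := by
  refine Gobj_le_Gobj hRA hRP hρ ?_
  have hcost : ∫ _ in (0:ℝ)..T, (k astar - astar) ≤ ∫ s in (0:ℝ)..T, (k (a s) - a s) :=
    intervalIntegral.integral_mono_on hT intervalIntegrable_const
      ((ha.intervalIntegrable_comp hT hk).sub (ha.intervalIntegrable_comp hT continuous_id))
      fun s hs => hastar_min _ (ha.2 s hs)
  have hz := isMinOn_univ_iff.1 (isMinOn_mul_one_sub_sq_add_mul_sq hRA hRP) z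
  unfold Gexponent
  nlinarith [mul_le_mul_of_nonneg_left hz (mul_nonneg hT hαA)]

theorem Gobj_const_eq (hRA : 0 < R_A) (hRP : 0 < R_P) (astar αA : ℝ) :
    Gobj R_A R_P ρ T k (fun _ => astar) (R_P / (R_A + R_P)) 0 αA αA
      = -(ρ ^ (R_P / (R_A + R_P)) * ((R_A + R_P) / R_P)
          * (R_A / R_P) ^ (-(R_A / (R_A + R_P)))
          * exp ((R_A * R_P / (R_A + R_P))
              * (T * (k astar - astar) + T / 2 * αA * R_A * R_P / (R_A + R_P)))) := by
  simp only [Gobj, intervalIntegral.integral_const, smul_eq_mul, sub_zero]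
  congr 3
  field_simp
  ring

end

theorem sup_Q_gamma_low_general (R_A R_P ρ T aMax : ℝ) (k : ℝ → ℝ)
    (hRA : 0 < R_A) (hRP : 0 < R_P) (hρ : 0 < ρ) (hT : 0 < T)
    (hkcont : Continuous k)
    (astar : ℝ) (hastar_mem : astar ∈ Set.Icc (0 : ℝ) aMax)
    (hastar_min : ∀ x ∈ Set.Icc (0 : ℝ) aMax, k astar - astar ≤ k x - x)
    (αPlow αAhigh : ℝ) (hαP : 0 < αPlow) (hlt : αPlow < αAhigh) :
    IsLUB {x : ℝ | ∃ a z γ δ, IsAction T aMax a ∧ γ < -(R_P * (1 - z) ^ 2) ∧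
        x = Fobj R_A R_P ρ T k a z γ δ αPlow αAhigh}
      (Gobj R_A R_P ρ T k (fun _ => astar) (R_P / (R_A + R_P)) 0 αAhigh αAhigh) ∧
    Gobj R_A R_P ρ T k (fun _ => astar) (R_P / (R_A + R_P)) 0 αAhigh αAhigh
      = -(ρ ^ (R_P / (R_A + R_P)) * ((R_A + R_P) / R_P)
          * (R_A / R_P) ^ (-(R_A / (R_A + R_P)))
          * Real.exp ((R_A * R_P / (R_A + R_P))
              * (T * (k astar - astar) + T / 2 * αAhigh * R_A * R_P / (R_A + R_P)))) := by
  set zstar := R_P / (R_A + R_P)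
  set γ₀ := -(R_P * (1 - zstar) ^ 2)
  have hastar : IsAction T aMax fun _ => astar := ⟨measurable_const, fun _ _ => hastar_mem⟩
  have hFG {a} (ha : IsAction T aMax a) (z γ) :=
    isGreatest_range_Fobj hRA hRP hρ (ha.intervalIntegrable_comp hT.le continuous_id)
      (ha.intervalIntegrable_comp hT.le hkcont) z γ αPlow αAhigh
  refine ⟨isLUB_of_mem_closure ?_ ?_, Gobj_const_eq hRA hRP astar αAhigh⟩
  · rintro _ ⟨a, z, γ, δ, ha, hγ, rfl⟩
    calc Fobj R_A R_P ρ T k a z γ δ αPlow αAhigh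
        ≤ Gobj R_A R_P ρ T k a z γ αPlow αAhigh := (hFG ha z γ).2 ⟨δ, rfl⟩
      _ ≤ Gobj R_A R_P ρ T k a z (-(R_P * (1 - z) ^ 2)) αPlow αAhigh :=
        monotone_Gobj_gamma hRA hRP hρ hT.le hlt.le z hγ.le
      _ = Gobj R_A R_P ρ T k a z 0 αAhigh αAhigh := Gobj_neg_mul_sq_eq z αPlow αAhigh
      _ ≤ _ := Gobj_le_Gobj_const hRA hRP hρ hT.le hkcont ha hastar_min (hαP.trans hlt).le z
  · rw [← Gobj_neg_mul_sq_eq zstar αPlow αAhigh]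
    refine mem_closure_of_tendsto
      ((continuous_Gobj_gamma zstar αPlow αAhigh).continuousWithinAt (s := Iio γ₀)) ?_
    filter_upwards [self_mem_nhdsWithin] with γ hγ
    obtain ⟨δ, hδ⟩ := (hFG hastar zstar γ).1
    exact ⟨_, zstar, γ, δ, hastar, hγ, hδ.symm⟩

/-- Lemma 3.3(i)a: if `α_P^low < α_A^high`, the supremum of `F` over deterministic
actions, `z ∈ ℝ`, `δ ∈ ℝ` and `γ < -R_P(1-z)²` equals `G(a*, z*, α_A^high)`. -/
theorem sup_Q_gamma_low (R_A R_P ρ T aMax : ℝ) (k : ℝ → ℝ)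
    (hRA : 0 < R_A) (hRP : 0 < R_P) (hρ : 0 < ρ) (hT : 0 < T) (haMax : 0 < aMax)
    (hkcont : Continuous k) (hkconv : StrictConvexOn ℝ Set.univ k) (hkmono : StrictMono k)
    (astar : ℝ) (hastar_mem : astar ∈ Set.Icc (0 : ℝ) aMax)
    (hastar_min : ∀ x ∈ Set.Icc (0 : ℝ) aMax, k astar - astar ≤ k x - x)
    (αPlow αAhigh : ℝ) (hαP : 0 < αPlow) (hlt : αPlow < αAhigh) :
    IsLUB {x : ℝ | ∃ a z γ δ, IsAction T aMax a ∧ γ < -(R_P * (1 - z) ^ 2) ∧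
        x = Fobj R_A R_P ρ T k a z γ δ αPlow αAhigh}
      (Gobj R_A R_P ρ T k (fun _ => astar) (R_P / (R_A + R_P)) 0 αAhigh αAhigh) ∧
    Gobj R_A R_P ρ T k (fun _ => astar) (R_P / (R_A + R_P)) 0 αAhigh αAhigh
      = -(ρ ^ (R_P / (R_A + R_P)) * ((R_A + R_P) / R_P)
          * (R_A / R_P) ^ (-(R_A / (R_A + R_P)))
          * Real.exp ((R_A * R_P / (R_A + R_P))
              * (T * (k astar - astar) + T / 2 * αAhigh * R_A * R_P / (R_A + R_P)))) :=
  sup_Q_gamma_low_general R_A R_P ρ T aMax k hRA hRP hρ hT hkcont astar hastar_mem hastar_min αPlow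
    αAhigh hαP hlt
end

section
/- (Deterministic form of Lemma 3.3(i)b, (iii)b and (v)a) For every α̃ > 0 and every γ ∈ ℝ, the supremum of G(a,z,γ,α̃,α̃) over all deterministic actions a and all z ∈ ℝ equals G(a*, z*, α̃) = -ρ^{R_P/(R_A+R_P)} ((R_A+R_P)/R_P)(R_A/R_P)^{-R_A/(R_A+R_P)} exp( (R_A R_P T/(R_A+R_P)) ( k(a*) - a* + (α̃/2) R_A R_P/(R_A+R_P) ) ), and this supremum is attained at a = a*, z = z*; moreover G(a,z,γ,α̃,α̃) does not depend on γ. -/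
open MeasureTheory

/-!
The constant `γ` enters `G` only through `γ (α_P - α_A)`, so it drops out on the diagonal
`α_P = α_A = α̃`, and `G` becomes a decreasing function of
`∫₀ᵀ (k(a) - a) + (α̃ T / 2) (R_P (1-z)² + R_A z²)`.
The integral is minimised by the constant action `a*`, since `a*` minimises `k(x) - x` pointwise
on `[0, a_max]`, and the quadratic in `z` is minimised at `z* = R_P/(R_A+R_P)`, where it equals
`R_A R_P/(R_A+R_P)`.
-/

open Set

theorem mul_div_add_le_mul_one_sub_sq_add_mul_sq {p q : ℝ} (hpq : 0 < p + q) (z : ℝ) :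
    p * q / (p + q) ≤ q * (1 - z) ^ 2 + p * z ^ 2 := by
  rw [div_le_iff₀ hpq]
  nlinarith [sq_nonneg ((p + q) * z - q)]

theorem mul_one_sub_sq_add_mul_sq_div_add {p q : ℝ} (hpq : p + q ≠ 0) :
    q * (1 - q / (p + q)) ^ 2 + p * (q / (p + q)) ^ 2 = p * q / (p + q) := by
  field_simp
  ring

theorem Continuous.intervalIntegrable_comp_of_mapsTo {g f : ℝ → ℝ} {K : Set ℝ} {a b : ℝ}
    (hg : Continuous g) (hK : IsCompact K) (hf : Measurable f) (hfK : MapsTo f (uIcc a b) K) :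
    IntervalIntegrable (fun s => g (f s)) volume a b := by
  obtain ⟨C, hC⟩ := hK.exists_bound_of_continuousOn hg.continuousOn
  refine IntegrableOn.intervalIntegrable <| Measure.integrableOn_of_bounded (M := C)
    measure_Icc_lt_top.ne (hg.measurable.comp hf).aestronglyMeasurable ?_
  exact (ae_restrict_iff' measurableSet_Icc).2 (.of_forall fun s hs => hC _ (hfK hs))

theorem Continuous.mul_le_integral_comp_of_isMinOn {g f : ℝ → ℝ} {K : Set ℝ} {x T : ℝ}
    (hg : Continuous g) (hK : IsCompact K) (hx : IsMinOn g K x) (hf : Measurable f)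
    (hT : 0 ≤ T) (hfK : MapsTo f (Icc 0 T) K) :
    T * g x ≤ ∫ s in (0 : ℝ)..T, g (f s) := by
  have hfK' : MapsTo f (uIcc 0 T) K := by rwa [uIcc_of_le hT]
  simpa using intervalIntegral.integral_mono_on hT intervalIntegrable_const
    (hg.intervalIntegrable_comp_of_mapsTo hK hf hfK') fun s hs => hx (hfK hs)

section Diagonal

variable {R_A R_P ρ T : ℝ} {k : ℝ → ℝ}

theorem Gobj_diag (a : ℝ → ℝ) (z γ α : ℝ) :
    Gobj R_A R_P ρ T k a z γ α α
      = -(ρ ^ (R_P / (R_A + R_P)) * ((R_A + R_P) / R_P) * (R_A / R_P) ^ (-(R_A / (R_A + R_P)))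
          * Real.exp (R_A * R_P / (R_A + R_P) * ((∫ s in (0:ℝ)..T, (k (a s) - a s))
            + α * T / 2 * (R_P * (1 - z) ^ 2 + R_A * z ^ 2)))) := by
  simp only [Gobj, sub_self, mul_zero, add_zero]
  ring_nf

theorem Gobj_diag_le_Gobj_diag (hRA : 0 < R_A) (hRP : 0 < R_P) (hρ : 0 < ρ)
    {a b : ℝ → ℝ} {z w γ α : ℝ}
    (h : (∫ s in (0:ℝ)..T, (k (b s) - b s)) + α * T / 2 * (R_P * (1 - w) ^ 2 + R_A * w ^ 2)
      ≤ (∫ s in (0:ℝ)..T, (k (a s) - a s)) + α * T / 2 * (R_P * (1 - z) ^ 2 + R_A * z ^ 2)) :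
    Gobj R_A R_P ρ T k a z γ α α ≤ Gobj R_A R_P ρ T k b w γ α α := by
  rw [Gobj_diag, Gobj_diag, neg_le_neg_iff]
  gcongr

end Diagonal

theorem sup_G_equal_vol_general (R_A R_P ρ T aMax : ℝ) (k : ℝ → ℝ)
    (hRA : 0 < R_A) (hRP : 0 < R_P) (hρ : 0 < ρ) (hT : 0 < T)
    (hkcont : Continuous k)
    (astar : ℝ) (hastar_mem : astar ∈ Set.Icc (0 : ℝ) aMax)
    (hastar_min : ∀ x ∈ Set.Icc (0 : ℝ) aMax, k astar - astar ≤ k x - x)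
    (αtilde : ℝ) (hα : 0 < αtilde) (γ : ℝ) :
    IsGreatest {x : ℝ | ∃ a z, IsAction T aMax a ∧ x = Gobj R_A R_P ρ T k a z γ αtilde αtilde}
      (Gobj R_A R_P ρ T k (fun _ => astar) (R_P / (R_A + R_P)) γ αtilde αtilde) ∧
    Gobj R_A R_P ρ T k (fun _ => astar) (R_P / (R_A + R_P)) γ αtilde αtilde
      = -(ρ ^ (R_P / (R_A + R_P)) * ((R_A + R_P) / R_P)
          * (R_A / R_P) ^ (-(R_A / (R_A + R_P)))
          * Real.exp ((R_A * R_P * T / (R_A + R_P))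
              * (k astar - astar + αtilde / 2 * R_A * R_P / (R_A + R_P)))) ∧
    (∀ (a : ℝ → ℝ) (z γ₁ γ₂ : ℝ),
      Gobj R_A R_P ρ T k a z γ₁ αtilde αtilde = Gobj R_A R_P ρ T k a z γ₂ αtilde αtilde) := by
  have hsum : 0 < R_A + R_P := add_pos hRA hRP
  have hquad_star := mul_one_sub_sq_add_mul_sq_div_add hsum.ne'
  refine ⟨⟨⟨_, _, ⟨measurable_const, fun _ _ => hastar_mem⟩, rfl⟩, ?_⟩, ?_, ?_⟩
  · rintro _ ⟨a, z, ⟨ha_meas, ha_mem⟩, rfl⟩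
    apply Gobj_diag_le_Gobj_diag hRA hRP hρ
    rw [hquad_star, intervalIntegral.integral_const, smul_eq_mul, sub_zero]
    gcongr ?_ + αtilde * T / 2 * ?_
    · exact (hkcont.sub continuous_id).mul_le_integral_comp_of_isMinOn isCompact_Icc
        hastar_min ha_meas hT.le ha_mem
    · exact mul_div_add_le_mul_one_sub_sq_add_mul_sq hsum z
  · rw [Gobj_diag, hquad_star, intervalIntegral.integral_const, smul_eq_mul, sub_zero]
    ring_nf
  · intro a z γ₁ γ₂
    rw [Gobj_diag, Gobj_diag]

/-- Lemma 3.3(i)b,(iii)b,(v)a: for any `α̃ > 0` and any `γ`, the supremum of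
`G(a,z,γ,α̃,α̃)` over deterministic actions `a` and `z ∈ ℝ` equals `G(a*,z*,α̃)`,
it is attained at `(a*, z*)`, and the value does not depend on `γ`. -/
theorem sup_G_equal_vol (R_A R_P ρ T aMax : ℝ) (k : ℝ → ℝ)
    (hRA : 0 < R_A) (hRP : 0 < R_P) (hρ : 0 < ρ) (hT : 0 < T) (haMax : 0 < aMax)
    (hkcont : Continuous k) (hkconv : StrictConvexOn ℝ Set.univ k) (hkmono : StrictMono k)
    (astar : ℝ) (hastar_mem : astar ∈ Set.Icc (0 : ℝ) aMax)
    (hastar_min : ∀ x ∈ Set.Icc (0 : ℝ) aMax, k astar - astar ≤ k x - x)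
    (αtilde : ℝ) (hα : 0 < αtilde) (γ : ℝ) :
    IsGreatest {x : ℝ | ∃ a z, IsAction T aMax a ∧ x = Gobj R_A R_P ρ T k a z γ αtilde αtilde}
      (Gobj R_A R_P ρ T k (fun _ => astar) (R_P / (R_A + R_P)) γ αtilde αtilde) ∧
    Gobj R_A R_P ρ T k (fun _ => astar) (R_P / (R_A + R_P)) γ αtilde αtilde
      = -(ρ ^ (R_P / (R_A + R_P)) * ((R_A + R_P) / R_P)
          * (R_A / R_P) ^ (-(R_A / (R_A + R_P)))
          * Real.exp ((R_A * R_P * T / (R_A + R_P))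
              * (k astar - astar + αtilde / 2 * R_A * R_P / (R_A + R_P)))) ∧
    (∀ (a : ℝ → ℝ) (z γ₁ γ₂ : ℝ),
      Gobj R_A R_P ρ T k a z γ₁ αtilde αtilde = Gobj R_A R_P ρ T k a z γ₂ αtilde αtilde) :=
  sup_G_equal_vol_general R_A R_P ρ T aMax k hRA hRP hρ hT hkcont astar hastar_mem hastar_min αtilde
    hα γ
end
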